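/- arXiv:2112.07149 — 5 statements merged into one kernel-verified Lean document; each statement's English description precedes it below -/
import Mathlib

section
/- Let q ∈ [0,1), k > 0, λ ≥ 0 and η > 0. Let β* ∈ ℝ^m be (q,k)-approximately sparse, let β̂ be a lasso estimator with penalty λ for data x_1,…,x_n ∈ ℝ^m, y_1,…,y_n ∈ ℝ, and assume the deviation bound ‖γ̂ − Γ̂β*‖_∞ ≤ λ/4. Set v = β̂ − β* and J = {i : |β*_i| > η}. Then vᵀΓ̂v ≤ (3/2)·λ·‖v_J‖₁ − (1/2)·λ·‖v_{J^c}‖₁ + 2·λ·η^{1−q}·k. -/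
open Finset Matrix

/-- A vector `β` is `(q,k)`-approximately sparse if `∑_{i : β i ≠ 0} |β i|^q ≤ k`. -/
noncomputable def ApproxSparse {m : ℕ} (q k : ℝ) (β : Fin m → ℝ) : Prop :=
  ∑ i ∈ Finset.univ.filter (fun i => β i ≠ 0), |β i| ^ q ≤ k

/-- The ℓ¹ norm of a vector. -/
noncomputable def l1norm {m : ℕ} (v : Fin m → ℝ) : ℝ := ∑ i, |v i|

/-- The ℓ² norm of a vector. -/
noncomputable def l2norm {m : ℕ} (v : Fin m → ℝ) : ℝ := Real.sqrt (∑ i, (v i) ^ 2)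

/-- The lasso objective `L(β) = (1/n) ∑_t (y t − βᵀ x t)² + λ ‖β‖₁`. -/
noncomputable def lassoLoss {m n : ℕ} (x : Fin n → Fin m → ℝ) (y : Fin n → ℝ)
    (lam : ℝ) (β : Fin m → ℝ) : ℝ :=
  (1 / (n : ℝ)) * ∑ t, (y t - ∑ i, β i * x t i) ^ 2 + lam * l1norm β

/-- `βhat` is a lasso estimator with penalty `lam` if it minimizes the lasso objective. -/
def IsLassoEstimator {m n : ℕ} (x : Fin n → Fin m → ℝ) (y : Fin n → ℝ)
    (lam : ℝ) (βhat : Fin m → ℝ) : Prop :=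
  ∀ β : Fin m → ℝ, lassoLoss x y lam βhat ≤ lassoLoss x y lam β

/-- The empirical Gram matrix `Γ̂ = (1/n) ∑_t x_t x_tᵀ`. -/
noncomputable def Γhat {m n : ℕ} (x : Fin n → Fin m → ℝ) : Matrix (Fin m) (Fin m) ℝ :=
  Matrix.of fun i j => (1 / (n : ℝ)) * ∑ t, x t i * x t j

/-- The empirical cross moments `γ̂ = (1/n) ∑_t y_t x_t`. -/
noncomputable def γhat {m n : ℕ} (x : Fin n → Fin m → ℝ) (y : Fin n → ℝ) : Fin m → ℝ :=
  fun i => (1 / (n : ℝ)) * ∑ t, y t * x t i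

/-- Refined basic inequality for the lasso under approximate sparsity and a deviation bound:
`vᵀ Γ̂ v ≤ (3/2) λ ‖v_J‖₁ − (1/2) λ ‖v_{Jᶜ}‖₁ + 2 λ η^{1−q} k`,
where `J = {i : |β*_i| > η}`. -/
theorem lasso_refined_basic_inequality {m n : ℕ} (q k lam η : ℝ)
    (hq0 : 0 ≤ q) (hq1 : q < 1) (hk : 0 < k) (hlam : 0 ≤ lam) (hη : 0 < η)
    (x : Fin n → Fin m → ℝ) (y : Fin n → ℝ) (βstar βhat : Fin m → ℝ)
    (hsparse : ApproxSparse q k βstar)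
    (hlasso : IsLassoEstimator x y lam βhat)
    (hdev : ∀ i, |γhat x y i - ∑ j, Γhat x i j * βstar j| ≤ lam / 4) :
    ∑ i, ∑ j, (βhat i - βstar i) * Γhat x i j * (βhat j - βstar j) ≤
      (3 / 2) * lam * (∑ i ∈ Finset.univ.filter (fun i => η < |βstar i|), |βhat i - βstar i|)
      - (1 / 2) * lam * (∑ i ∈ Finset.univ.filter (fun i => ¬ η < |βstar i|), |βhat i - βstar i|)
      + 2 * lam * η ^ (1 - q) * k := by
  classical
  set c : ℝ := 1 / (n : ℝ) with hc
  set v : Fin m → ℝ := fun i => βhat i - βstar i with hvdef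
  set S : Fin n → ℝ := fun t => ∑ i, v i * x t i with hSdef
  set R : Fin n → ℝ := fun t => y t - ∑ i, βstar i * x t i with hRdef
  set J : Finset (Fin m) := Finset.univ.filter (fun i => η < |βstar i|) with hJdef
  set Jc : Finset (Fin m) := Finset.univ.filter (fun i => ¬ η < |βstar i|) with hJcdef
  -- quadratic form identity
  have hA : ∑ i, ∑ j, v i * Γhat x i j * v j = c * ∑ t, (S t) ^ 2 := by
    have h1 : ∀ i j : Fin m, v i * Γhat x i j * v j
        = c * ∑ t, (v i * x t i) * (v j * x t j) := by
      intro i j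
      simp only [Γhat, Matrix.of_apply, Finset.mul_sum, Finset.sum_mul, ← hc]
      exact Finset.sum_congr rfl fun t _ => by ring
    have h2 : ∀ t, (S t) ^ 2 = ∑ i, ∑ j, (v i * x t i) * (v j * x t j) := by
      intro t; rw [sq, hSdef, Finset.sum_mul_sum]
    simp only [h1, ← Finset.mul_sum]
    congr 1
    simp only [h2]
    rw [show (∑ i, ∑ j, ∑ t, (v i * x t i) * (v j * x t j))
        = ∑ i, ∑ t, ∑ j, (v i * x t i) * (v j * x t j) from
      Finset.sum_congr rfl fun i _ =>
        Finset.sum_comm (f := fun j t => (v i * x t i) * (v j * x t j)),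
      Finset.sum_comm (f := fun i t => ∑ j, (v i * x t i) * (v j * x t j))]
  -- cross term identity
  have hB : ∑ i, v i * (γhat x y i - ∑ j, Γhat x i j * βstar j)
      = c * ∑ t, R t * S t := by
    have h1 : ∀ i : Fin m, v i * (γhat x y i - ∑ j, Γhat x i j * βstar j)
        = ∑ t, c * (R t * (v i * x t i)) := by
      intro i
      have e : ∀ t : Fin n, c * (R t * (v i * x t i))
          = v i * (c * (y t * x t i)) - ∑ j, v i * (c * (x t i * x t j) * βstar j) := by
        intro t
        simp only [hRdef, sub_mul, mul_sub, Finset.sum_mul, Finset.mul_sum]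
        congr 1
        · ring
        · rw [show (∑ j, c * (βstar j * x t j * (v i * x t i)))
              = ∑ j, v i * (c * (x t i * x t j) * βstar j) from
            Finset.sum_congr rfl fun j _ => by ring]
      simp only [e, Finset.sum_sub_distrib]
      rw [mul_sub]
      congr 1
      · simp only [γhat, Finset.mul_sum, ← hc]
      · rw [Finset.sum_comm (f := fun t j => v i * (c * (x t i * x t j) * βstar j)),
          Finset.mul_sum]
        refine Finset.sum_congr rfl fun j _ => ?_
        simp only [Γhat, Matrix.of_apply, Finset.mul_sum, Finset.sum_mul, ← hc]
    simp only [h1, Finset.mul_sum]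
    rw [Finset.sum_comm (f := fun i t => c * (R t * (v i * x t i)))]
    refine Finset.sum_congr rfl fun t _ => ?_
    rw [hSdef]
    simp only [Finset.mul_sum]
  -- basic inequality from minimality
  have hyhat : ∀ t, y t - ∑ i, βhat i * x t i = R t - S t := by
    intro t
    have e : ∑ i, βstar i * x t i + ∑ i, v i * x t i = ∑ i, βhat i * x t i := by
      rw [← Finset.sum_add_distrib]
      exact Finset.sum_congr rfl fun i _ => by simp only [hvdef]; ring
    simp only [hRdef, hSdef]
    linarith [e]
  have key : c * ∑ t, (S t) ^ 2
      ≤ 2 * (c * ∑ t, R t * S t) + lam * (l1norm βstar - l1norm βhat) := by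
    have h := hlasso βstar
    simp only [lassoLoss, ← hc] at h
    have e1 : ∀ t, (y t - ∑ i, βhat i * x t i) ^ 2
        = R t ^ 2 - 2 * (R t * S t) + S t ^ 2 := by
      intro t; rw [hyhat t]; ring
    have e2 : ∀ t, (y t - ∑ i, βstar i * x t i) ^ 2 = R t ^ 2 := fun t => rfl
    simp only [e1, e2] at h
    have e3 : ∑ t, (R t ^ 2 - 2 * (R t * S t) + S t ^ 2)
        = ∑ t, R t ^ 2 - 2 * ∑ t, (R t * S t) + ∑ t, S t ^ 2 := by
      rw [Finset.sum_add_distrib, Finset.sum_sub_distrib, Finset.mul_sum]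
    rw [e3] at h
    have e4 : c * (∑ t, R t ^ 2 - 2 * ∑ t, (R t * S t) + ∑ t, S t ^ 2)
        = c * ∑ t, R t ^ 2 - 2 * (c * ∑ t, R t * S t) + c * ∑ t, S t ^ 2 := by ring
    rw [e4] at h
    have e5 : lam * (l1norm βstar - l1norm βhat)
        = lam * l1norm βstar - lam * l1norm βhat := by ring
    rw [e5]
    linarith
  have main : ∑ i, ∑ j, v i * Γhat x i j * v j
      ≤ 2 * ∑ i, v i * (γhat x y i - ∑ j, Γhat x i j * βstar j)
        + lam * (l1norm βstar - l1norm βhat) := by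
    rw [hA, hB]; exact key
  -- deviation bound
  have hdev2 : ∑ i, v i * (γhat x y i - ∑ j, Γhat x i j * βstar j)
      ≤ (lam / 4) * ∑ i, |v i| := by
    rw [Finset.mul_sum]
    refine Finset.sum_le_sum fun i _ => ?_
    calc v i * (γhat x y i - ∑ j, Γhat x i j * βstar j)
        ≤ |v i * (γhat x y i - ∑ j, Γhat x i j * βstar j)| := le_abs_self _
      _ = |v i| * |γhat x y i - ∑ j, Γhat x i j * βstar j| := abs_mul _ _
      _ ≤ |v i| * (lam / 4) := mul_le_mul_of_nonneg_left (hdev i) (abs_nonneg _)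
      _ = lam / 4 * |v i| := mul_comm _ _
  have hsplit : ∑ i, |v i| = ∑ i ∈ J, |v i| + ∑ i ∈ Jc, |v i| :=
    (Finset.sum_filter_add_sum_filter_not _ _ _).symm
  -- l1 norm bound
  have hl1 : l1norm βstar - l1norm βhat
      ≤ ∑ i ∈ J, |v i| + (2 * ∑ i ∈ Jc, |βstar i| - ∑ i ∈ Jc, |v i|) := by
    have e : l1norm βstar - l1norm βhat = ∑ i, (|βstar i| - |βhat i|) := by
      simp [l1norm, Finset.sum_sub_distrib]
    rw [e, ← Finset.sum_filter_add_sum_filter_not Finset.univ (fun i => η < |βstar i|)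
      (fun i => |βstar i| - |βhat i|)]
    have h1 : ∑ i ∈ J, (|βstar i| - |βhat i|) ≤ ∑ i ∈ J, |v i| := by
      refine Finset.sum_le_sum fun i _ => ?_
      have h := abs_sub_abs_le_abs_sub (βstar i) (βhat i)
      have e2 : |βstar i - βhat i| = |v i| := by
        rw [show βstar i - βhat i = -(v i) from by simp only [hvdef]; ring, abs_neg]
      linarith
    have h2 : ∑ i ∈ Jc, (|βstar i| - |βhat i|)
        ≤ ∑ i ∈ Jc, (2 * |βstar i| - |v i|) := by
      refine Finset.sum_le_sum fun i _ => ?_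
      have h3 : |v i| ≤ |βhat i| + |βstar i| := by
        calc |v i| = |βhat i + -βstar i| := by
              rw [show v i = βhat i + -βstar i from by simp only [hvdef]; ring]
          _ ≤ |βhat i| + |-βstar i| := abs_add_le _ _
          _ = |βhat i| + |βstar i| := by rw [abs_neg]
      linarith
    have h4 : ∑ i ∈ Jc, (2 * |βstar i| - |v i|)
        = 2 * ∑ i ∈ Jc, |βstar i| - ∑ i ∈ Jc, |v i| := by
      rw [Finset.sum_sub_distrib, Finset.mul_sum]
    linarith
  -- sparsity bound
  have hT : ∑ i ∈ Jc, |βstar i| ≤ η ^ (1 - q) * k := by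
    have step1 : ∑ i ∈ Jc, |βstar i|
        = ∑ i ∈ Jc.filter (fun i => βstar i ≠ 0), |βstar i| :=
      (Finset.sum_filter_of_ne fun i _ h => abs_ne_zero.mp h).symm
    have step2 : ∑ i ∈ Jc.filter (fun i => βstar i ≠ 0), |βstar i|
        ≤ ∑ i ∈ Jc.filter (fun i => βstar i ≠ 0), η ^ (1 - q) * |βstar i| ^ q := by
      refine Finset.sum_le_sum fun i hi => ?_
      simp only [hJcdef, Finset.mem_filter, Finset.mem_univ, true_and, not_lt] at hi
      obtain ⟨hle, hne⟩ := hi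
      have hpos : 0 < |βstar i| := abs_pos.mpr hne
      calc |βstar i| = |βstar i| ^ ((1 - q) + q) := by
            rw [show (1 - q) + q = (1 : ℝ) by ring, Real.rpow_one]
        _ = |βstar i| ^ (1 - q) * |βstar i| ^ q := Real.rpow_add hpos _ _
        _ ≤ η ^ (1 - q) * |βstar i| ^ q :=
            mul_le_mul_of_nonneg_right
              (Real.rpow_le_rpow (abs_nonneg _) hle (by linarith))
              (Real.rpow_nonneg (abs_nonneg _) q)
    have step3 : ∑ i ∈ Jc.filter (fun i => βstar i ≠ 0), η ^ (1 - q) * |βstar i| ^ q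
        ≤ η ^ (1 - q) * k := by
      rw [← Finset.mul_sum]
      refine mul_le_mul_of_nonneg_left ?_ (Real.rpow_nonneg hη.le _)
      refine le_trans (Finset.sum_le_sum_of_subset_of_nonneg ?_
        (fun i _ _ => Real.rpow_nonneg (abs_nonneg _) q)) hsparse
      intro i hi
      simp only [hJcdef, Finset.mem_filter, Finset.mem_univ, true_and] at hi ⊢
      exact hi.2
    linarith
  -- combine everything
  have goal' : ∑ i, ∑ j, v i * Γhat x i j * v j
      ≤ (3 / 2) * lam * (∑ i ∈ J, |v i|) - (1 / 2) * lam * (∑ i ∈ Jc, |v i|)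
        + 2 * lam * η ^ (1 - q) * k := by
    have p1 : lam * (l1norm βstar - l1norm βhat)
        ≤ lam * (∑ i ∈ J, |v i| + (2 * ∑ i ∈ Jc, |βstar i| - ∑ i ∈ Jc, |v i|)) :=
      mul_le_mul_of_nonneg_left hl1 hlam
    have p2 : lam * (∑ i ∈ Jc, |βstar i|) ≤ lam * (η ^ (1 - q) * k) :=
      mul_le_mul_of_nonneg_left hT hlam
    nlinarith [main, hdev2, hsplit, p1, p2]
  exact goal'
end

section
/- Let q ∈ [0,1), k > 0, λ > 0 and η > 0. Let β* ∈ ℝ^m be (q,k)-approximately sparse, let β̂ be a lasso estimator with penalty λ for data x_1,…,x_n ∈ ℝ^m, y_1,…,y_n ∈ ℝ, and assume the deviation bound ‖γ̂ − Γ̂β*‖_∞ ≤ λ/4. Set v = β̂ − β* and J = {i : |β*_i| > η}. Then the lasso error satisfies the cone condition ‖v_{J^c}‖₁ ≤ 3·‖v_J‖₁ + 4·η^{1−q}·k. -/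
open Finset Matrix

/-- Cone condition for the lasso error under approximate sparsity and a deviation bound:
`‖v_{Jᶜ}‖₁ ≤ 3 ‖v_J‖₁ + 4 η^{1−q} k`, where `J = {i : |β*_i| > η}`. -/
theorem lasso_cone_condition {m n : ℕ} (q k lam η : ℝ)
    (hq0 : 0 ≤ q) (hq1 : q < 1) (hk : 0 < k) (hlam : 0 < lam) (hη : 0 < η)
    (x : Fin n → Fin m → ℝ) (y : Fin n → ℝ) (βstar βhat : Fin m → ℝ)
    (hsparse : ApproxSparse q k βstar)
    (hlasso : IsLassoEstimator x y lam βhat)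
    (hdev : ∀ i, |γhat x y i - ∑ j, Γhat x i j * βstar j| ≤ lam / 4) :
    (∑ i ∈ Finset.univ.filter (fun i => ¬ η < |βstar i|), |βhat i - βstar i|) ≤
      3 * (∑ i ∈ Finset.univ.filter (fun i => η < |βstar i|), |βhat i - βstar i|)
      + 4 * η ^ (1 - q) * k := by
  classical
  have hn : (0:ℝ) ≤ 1 / (n:ℝ) := by positivity
  -- rewrite the deviation vector
  have hci : ∀ i, γhat x y i - ∑ j, Γhat x i j * βstar j
      = (1/(n:ℝ)) * ∑ t, x t i * (y t - ∑ j, βstar j * x t j) := by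
    intro i
    simp only [γhat, Γhat, Matrix.of_apply, mul_sub, Finset.mul_sum, Finset.sum_mul,
      Finset.sum_sub_distrib]
    congr 1
    · exact Finset.sum_congr rfl (fun t _ => by ring)
    · rw [Finset.sum_comm]
      exact Finset.sum_congr rfl (fun t _ => Finset.sum_congr rfl (fun j _ => by ring))
  -- cross term identity
  have hab : ∑ i, (βhat i - βstar i) * (γhat x y i - ∑ j, Γhat x i j * βstar j)
      = (1/(n:ℝ)) * ∑ t, (∑ i, (βhat i - βstar i) * x t i) * (y t - ∑ j, βstar j * x t j) := by
    simp only [hci]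
    calc ∑ i, (βhat i - βstar i) * ((1/(n:ℝ)) * ∑ t, x t i * (y t - ∑ j, βstar j * x t j))
        = ∑ i, ∑ t, (βhat i - βstar i) * ((1/(n:ℝ)) * (x t i * (y t - ∑ j, βstar j * x t j))) := by
          exact Finset.sum_congr rfl (fun i _ => by rw [Finset.mul_sum, Finset.mul_sum])
      _ = ∑ t, ∑ i, (βhat i - βstar i) * ((1/(n:ℝ)) * (x t i * (y t - ∑ j, βstar j * x t j))) :=
          Finset.sum_comm
      _ = (1/(n:ℝ)) * ∑ t, (∑ i, (βhat i - βstar i) * x t i) * (y t - ∑ j, βstar j * x t j) := by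
          rw [Finset.mul_sum]
          refine Finset.sum_congr rfl (fun t _ => ?_)
          rw [Finset.sum_mul, Finset.mul_sum]
          exact Finset.sum_congr rfl (fun i _ => by ring)
  -- expand the loss of βhat
  have hloss : lassoLoss x y lam βhat
      = lassoLoss x y lam βstar + lam * l1norm βhat - lam * l1norm βstar
        + (1/(n:ℝ)) * ∑ t, (∑ i, (βhat i - βstar i) * x t i)^2
        - 2 * ∑ i, (βhat i - βstar i) * (γhat x y i - ∑ j, Γhat x i j * βstar j) := by
    rw [hab]
    simp only [lassoLoss]
    have hexp : ∀ t, (y t - ∑ i, βhat i * x t i)^2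
        = (y t - ∑ i, βstar i * x t i)^2 + (∑ i, (βhat i - βstar i) * x t i)^2
          - 2 * ((∑ i, (βhat i - βstar i) * x t i) * (y t - ∑ j, βstar j * x t j)) := by
      intro t
      have h1 : ∑ i, (βhat i - βstar i) * x t i
          = (∑ i, βhat i * x t i) - ∑ i, βstar i * x t i := by
        rw [← Finset.sum_sub_distrib]
        exact Finset.sum_congr rfl (fun i _ => by ring)
      rw [h1]; ring
    rw [Finset.sum_congr rfl (fun t _ => hexp t)]
    rw [Finset.sum_sub_distrib, Finset.sum_add_distrib, ← Finset.mul_sum]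
    ring
  -- basic inequality
  have hbasic : lam * l1norm βhat ≤ lam * l1norm βstar
      + 2 * ∑ i, (βhat i - βstar i) * (γhat x y i - ∑ j, Γhat x i j * βstar j) := by
    have h := hlasso βstar
    rw [hloss] at h
    have hnn : 0 ≤ (1/(n:ℝ)) * ∑ t, (∑ i, (βhat i - βstar i) * x t i)^2 := by positivity
    linarith
  -- bound the cross term
  have hcross : ∑ i, (βhat i - βstar i) * (γhat x y i - ∑ j, Γhat x i j * βstar j)
      ≤ (lam/4) * ∑ i, |βhat i - βstar i| := by
    rw [Finset.mul_sum]
    refine Finset.sum_le_sum (fun i _ => ?_)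
    calc (βhat i - βstar i) * (γhat x y i - ∑ j, Γhat x i j * βstar j)
        ≤ |(βhat i - βstar i) * (γhat x y i - ∑ j, Γhat x i j * βstar j)| := le_abs_self _
      _ = |βhat i - βstar i| * |γhat x y i - ∑ j, Γhat x i j * βstar j| := abs_mul _ _
      _ ≤ |βhat i - βstar i| * (lam/4) := by
          exact mul_le_mul_of_nonneg_left (hdev i) (abs_nonneg _)
      _ = (lam/4) * |βhat i - βstar i| := by ring
  have key : l1norm βhat ≤ l1norm βstar + (1/2) * ∑ i, |βhat i - βstar i| := by
    have h2 : lam * l1norm βhat ≤ lam * (l1norm βstar + (1/2) * ∑ i, |βhat i - βstar i|) := by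
      calc lam * l1norm βhat ≤ lam * l1norm βstar
            + 2 * ∑ i, (βhat i - βstar i) * (γhat x y i - ∑ j, Γhat x i j * βstar j) := hbasic
        _ ≤ lam * l1norm βstar + 2 * ((lam/4) * ∑ i, |βhat i - βstar i|) := by linarith
        _ = lam * (l1norm βstar + (1/2) * ∑ i, |βhat i - βstar i|) := by ring
    exact le_of_mul_le_mul_left h2 hlam
  -- set up the split
  set J := Finset.univ.filter (fun i : Fin m => η < |βstar i|) with hJdef
  set Jc := Finset.univ.filter (fun i : Fin m => ¬ η < |βstar i|) with hJcdef
  have hsplitv : ∑ i, |βhat i - βstar i|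
      = (∑ i ∈ J, |βhat i - βstar i|) + ∑ i ∈ Jc, |βhat i - βstar i| :=
    (Finset.sum_filter_add_sum_filter_not _ _ _).symm
  have hsplitβ : l1norm βstar = (∑ i ∈ J, |βstar i|) + ∑ i ∈ Jc, |βstar i| :=
    (Finset.sum_filter_add_sum_filter_not _ _ _).symm
  -- lower bound for l1norm βhat
  have hlower : (∑ i ∈ J, |βstar i|) - (∑ i ∈ J, |βhat i - βstar i|)
      + (∑ i ∈ Jc, |βhat i - βstar i|) - (∑ i ∈ Jc, |βstar i|) ≤ l1norm βhat := by
    have h1 : (∑ i ∈ J, |βstar i|) - (∑ i ∈ J, |βhat i - βstar i|)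
        ≤ ∑ i ∈ J, |βhat i| := by
      rw [← Finset.sum_sub_distrib]
      refine Finset.sum_le_sum (fun i _ => ?_)
      have := abs_sub_abs_le_abs_sub (βstar i) (βhat i)
      rw [abs_sub_comm] at this
      linarith
    have h2 : (∑ i ∈ Jc, |βhat i - βstar i|) - (∑ i ∈ Jc, |βstar i|)
        ≤ ∑ i ∈ Jc, |βhat i| := by
      rw [← Finset.sum_sub_distrib]
      refine Finset.sum_le_sum (fun i _ => ?_)
      have := abs_sub (βhat i) (βstar i)
      have h3 := abs_sub_abs_le_abs_sub (βhat i - βstar i) (- βstar i)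
      simp only [sub_neg_eq_add, sub_add_cancel, abs_neg] at h3
      linarith
    have h4 : l1norm βhat = (∑ i ∈ J, |βhat i|) + ∑ i ∈ Jc, |βhat i| :=
      (Finset.sum_filter_add_sum_filter_not _ _ _).symm
    linarith
  -- bound the small entries of βstar
  have hS : (∑ i ∈ Jc, |βstar i|) ≤ η ^ (1 - q) * k := by
    have hstep : ∑ i ∈ Jc, |βstar i| = ∑ i ∈ Jc.filter (fun i => βstar i ≠ 0), |βstar i| :=
      (Finset.sum_filter_of_ne (fun i _ h => by simpa [abs_eq_zero] using h)).symm
    rw [hstep]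
    have hterm : ∀ i ∈ Jc.filter (fun i => βstar i ≠ 0),
        |βstar i| ≤ η ^ (1 - q) * |βstar i| ^ q := by
      intro i hi
      simp only [Finset.mem_filter, hJcdef, not_lt] at hi
      obtain ⟨⟨-, hle⟩, hne⟩ := hi
      have h0 : 0 < |βstar i| := abs_pos.mpr hne
      have heq : |βstar i| = |βstar i| ^ (1 - q) * |βstar i| ^ q := by
        rw [← Real.rpow_add h0]
        norm_num
      conv_lhs => rw [heq]
      refine mul_le_mul_of_nonneg_right ?_ (Real.rpow_nonneg (abs_nonneg _) q)
      exact Real.rpow_le_rpow h0.le hle (by linarith)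
    calc ∑ i ∈ Jc.filter (fun i => βstar i ≠ 0), |βstar i|
        ≤ ∑ i ∈ Jc.filter (fun i => βstar i ≠ 0), η ^ (1 - q) * |βstar i| ^ q :=
          Finset.sum_le_sum hterm
      _ = η ^ (1 - q) * ∑ i ∈ Jc.filter (fun i => βstar i ≠ 0), |βstar i| ^ q := by
          rw [Finset.mul_sum]
      _ ≤ η ^ (1 - q) * k := by
          refine mul_le_mul_of_nonneg_left ?_ (Real.rpow_nonneg hη.le _)
          refine le_trans ?_ hsparse
          refine Finset.sum_le_sum_of_subset_of_nonneg ?_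
            (fun i _ _ => Real.rpow_nonneg (abs_nonneg _) q)
          intro i hi
          simp only [Finset.mem_filter, hJcdef] at hi ⊢
          exact ⟨Finset.mem_univ i, hi.2⟩
    -- done hS
  have hrp : 0 ≤ η ^ (1 - q) * k := mul_nonneg (Real.rpow_nonneg hη.le _) hk.le
  rw [hsplitv, hsplitβ] at key
  linarith
end

section
/- Let q ∈ [0,1), k > 0 and η > 0. Let v ∈ ℝ^m and let J ⊆ {1,…,m} be an index set with |J| ≤ η^{−q}·k. If ‖v_{J^c}‖₁ ≤ 3·‖v_J‖₁ + 4·η^{1−q}·k, then ‖v‖₁ ≤ 4·√k·η^{−q/2}·‖v‖₂ + 4·k·η^{1−q}. -/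
open Finset

/-- If `|J| ≤ η^{−q} k` and the cone condition `‖v_{Jᶜ}‖₁ ≤ 3 ‖v_J‖₁ + 4 η^{1−q} k` holds,
then `‖v‖₁ ≤ 4 √k η^{−q/2} ‖v‖₂ + 4 k η^{1−q}`. -/
theorem l1_bound_from_cone {m : ℕ} (q k η : ℝ)
    (hq0 : 0 ≤ q) (hq1 : q < 1) (hk : 0 < k) (hη : 0 < η)
    (v : Fin m → ℝ) (J : Finset (Fin m))
    (hcard : (J.card : ℝ) ≤ η ^ (-q) * k)
    (hcone : (∑ i ∈ Jᶜ, |v i|) ≤ 3 * (∑ i ∈ J, |v i|) + 4 * η ^ (1 - q) * k) :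
    (∑ i, |v i|) ≤
      4 * Real.sqrt k * η ^ (-(q / 2)) * Real.sqrt (∑ i, (v i) ^ 2)
        + 4 * k * η ^ (1 - q) := by
  have hsplit : (∑ i, |v i|) = (∑ i ∈ J, |v i|) + (∑ i ∈ Jᶜ, |v i|) := by
    rw [← Finset.sum_add_sum_compl J]
  -- Cauchy–Schwarz on J
  have hcs : ((∑ i ∈ J, |v i|)) ^ 2 ≤ (J.card : ℝ) * ∑ i, (v i) ^ 2 := by
    calc ((∑ i ∈ J, |v i|)) ^ 2 ≤ (J.card : ℝ) * ∑ i ∈ J, |v i| ^ 2 := by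
          exact sq_sum_le_card_mul_sum_sq
      _ ≤ (J.card : ℝ) * ∑ i, (v i) ^ 2 := by
          apply mul_le_mul_of_nonneg_left _ (by positivity)
          simp only [sq_abs]
          exact Finset.sum_le_sum_of_subset_of_nonneg (Finset.subset_univ J)
            (fun i _ _ => sq_nonneg _)
  have hJ1 : (∑ i ∈ J, |v i|) ≤ Real.sqrt ((J.card : ℝ)) * Real.sqrt (∑ i, (v i) ^ 2) := by
    rw [← Real.sqrt_mul (by positivity)]
    have := Real.sqrt_le_sqrt hcs
    rwa [Real.sqrt_sq (by positivity)] at this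
  have hJ2 : Real.sqrt ((J.card : ℝ)) ≤ Real.sqrt k * η ^ (-(q / 2)) := by
    have h1 : Real.sqrt (η ^ (-q) * k) = Real.sqrt k * η ^ (-(q / 2)) := by
      rw [Real.sqrt_mul (by positivity), mul_comm]
      congr 1
      rw [Real.sqrt_eq_rpow, ← Real.rpow_mul hη.le]
      ring_nf
    rw [← h1]
    exact Real.sqrt_le_sqrt hcard
  have hJ : (∑ i ∈ J, |v i|) ≤ Real.sqrt k * η ^ (-(q / 2)) * Real.sqrt (∑ i, (v i) ^ 2) := by
    calc (∑ i ∈ J, |v i|) ≤ Real.sqrt ((J.card : ℝ)) * Real.sqrt (∑ i, (v i) ^ 2) := hJ1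
      _ ≤ Real.sqrt k * η ^ (-(q / 2)) * Real.sqrt (∑ i, (v i) ^ 2) :=
          mul_le_mul_of_nonneg_right hJ2 (Real.sqrt_nonneg _)
  calc (∑ i, |v i|) = (∑ i ∈ J, |v i|) + (∑ i ∈ Jᶜ, |v i|) := hsplit
    _ ≤ (∑ i ∈ J, |v i|) + (3 * (∑ i ∈ J, |v i|) + 4 * η ^ (1 - q) * k) := by linarith
    _ = 4 * (∑ i ∈ J, |v i|) + 4 * k * η ^ (1 - q) := by ring
    _ ≤ 4 * (Real.sqrt k * η ^ (-(q / 2)) * Real.sqrt (∑ i, (v i) ^ 2)) + 4 * k * η ^ (1 - q) := by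
        linarith
    _ = 4 * Real.sqrt k * η ^ (-(q / 2)) * Real.sqrt (∑ i, (v i) ^ 2) + 4 * k * η ^ (1 - q) := by
        ring
end

section
/- Let Γ, Γ̂ ∈ ℝ^{m×m} with Γ symmetric, and let α > 0 be such that xᵀΓx ≥ α‖x‖₂² for all x ∈ ℝ^m (i.e., the smallest eigenvalue of Γ is at least α). Then for every Θ ∈ ℝ^m one has the restricted-eigenvalue transfer inequality ΘᵀΓ̂Θ ≥ α‖Θ‖₂² − ‖Γ̂ − Γ‖_max · ‖Θ‖₁². -/
open Finset Matrix

/-- The entrywise maximum norm of a matrix. -/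
noncomputable def maxAbsEntry {a b : ℕ} (A : Matrix (Fin a) (Fin b) ℝ) : ℝ :=
  ⨆ i, ⨆ j, |A i j|

lemma abs_le_maxAbsEntry {a b : ℕ} (A : Matrix (Fin a) (Fin b) ℝ) (i : Fin a) (j : Fin b) :
    |A i j| ≤ maxAbsEntry A := by
  have h1 : |A i j| ≤ ⨆ j, |A i j| :=
    le_ciSup (f := fun j => |A i j|) (Set.Finite.bddAbove (Set.finite_range _)) j
  exact h1.trans (le_ciSup (f := fun i => ⨆ j, |A i j|)
    (Set.Finite.bddAbove (Set.finite_range _)) i)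

/-- Restricted-eigenvalue transfer: if the symmetric matrix `Γ` satisfies
`xᵀ Γ x ≥ α ‖x‖₂²` for all `x`, then for any matrix `Γ̂` and every `Θ`,
`Θᵀ Γ̂ Θ ≥ α ‖Θ‖₂² − ‖Γ̂ − Γ‖_max ‖Θ‖₁²`. -/
theorem restricted_eigenvalue_transfer {m : ℕ} (α : ℝ) (hα : 0 < α)
    (Γ Γhat : Matrix (Fin m) (Fin m) ℝ) (hsymm : Γ.IsSymm)
    (hmin : ∀ x : Fin m → ℝ, α * (∑ i, (x i) ^ 2) ≤ x ⬝ᵥ Γ.mulVec x) :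
    ∀ Θ : Fin m → ℝ,
      α * (∑ i, (Θ i) ^ 2) - maxAbsEntry (Γhat - Γ) * (∑ i, |Θ i|) ^ 2 ≤
        Θ ⬝ᵥ Γhat.mulVec Θ := by
  intro Θ
  set D := Γhat - Γ with hD
  set M := maxAbsEntry D with hMdef
  have hsplit : Θ ⬝ᵥ Γhat.mulVec Θ = Θ ⬝ᵥ Γ.mulVec Θ + Θ ⬝ᵥ D.mulVec Θ := by
    rw [hD, Matrix.sub_mulVec, dotProduct_sub]; ring
  have hbound : -(M * (∑ i, |Θ i|) ^ 2) ≤ Θ ⬝ᵥ D.mulVec Θ := by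
    have h1 : |Θ ⬝ᵥ D.mulVec Θ| ≤ M * (∑ i, |Θ i|) ^ 2 := by
      have : Θ ⬝ᵥ D.mulVec Θ = ∑ i, ∑ j, Θ i * (D i j * Θ j) := by
        simp [dotProduct, mulVec, Finset.mul_sum]
      rw [this]
      calc |∑ i, ∑ j, Θ i * (D i j * Θ j)|
          ≤ ∑ i, ∑ j, |Θ i * (D i j * Θ j)| := by
            refine (Finset.abs_sum_le_sum_abs _ _).trans ?_
            exact Finset.sum_le_sum fun i _ => Finset.abs_sum_le_sum_abs _ _
        _ ≤ ∑ i, ∑ j, |Θ i| * (M * |Θ j|) := by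
            refine Finset.sum_le_sum fun i _ => Finset.sum_le_sum fun j _ => ?_
            rw [abs_mul, abs_mul]
            have := abs_le_maxAbsEntry D i j
            exact mul_le_mul_of_nonneg_left
              (mul_le_mul_of_nonneg_right this (abs_nonneg _)) (abs_nonneg _)
        _ = M * (∑ i, |Θ i|) ^ 2 := by
            rw [sq, Finset.sum_mul_sum, Finset.mul_sum]
            refine Finset.sum_congr rfl fun i _ => ?_
            rw [Finset.mul_sum]
            exact Finset.sum_congr rfl fun j _ => by ring
    linarith [neg_abs_le (Θ ⬝ᵥ D.mulVec Θ)]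
  have := hmin Θ
  linarith [hsplit, hbound, this]
end

section
/- Let X = FΛᵀ + Ξ with F ∈ ℝ^{T×r}, Λ ∈ ℝ^{N×r}, Ξ ∈ ℝ^{T×N}. Let F̂ ∈ ℝ^{T×r} and a symmetric invertible D² ∈ ℝ^{r×r} satisfy the eigen-equation (1/(NT)) X Xᵀ F̂ = F̂ D². Define the rotation matrix H = D^{−2} (F̂ᵀF/T)(ΛᵀΛ/N), i.e., Hᵀ = (ΛᵀΛ/N)(FᵀF̂/T) D^{−2}. Writing f_t, f̂_t ∈ ℝ^r and ξ_t ∈ ℝ^N for the t-th rows of F, F̂ and Ξ (as column vectors), for every t = 1,…,T one has the exact representation f̂_t − H f_t = D^{−2} · (1/(NT)) ∑_{s=1}^T ( f_tᵀΛᵀξ_s + ξ_tᵀΛf_s + ξ_tᵀξ_s ) f̂_s. -/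
open Matrix Finset

/-- Exact representation of the factor estimation error: with
`H = D⁻² (F̂ᵀF/T)(ΛᵀΛ/N)`, one has for every `t`
`f̂_t − H f_t = D⁻² (1/(NT)) ∑_s (f_tᵀΛᵀξ_s + ξ_tᵀΛ f_s + ξ_tᵀξ_s) f̂_s`. -/
theorem factor_error_representation {T N r : ℕ} (hT : 0 < T) (hN : 0 < N)
    (F Fhat : Matrix (Fin T) (Fin r) ℝ) (Λ : Matrix (Fin N) (Fin r) ℝ)
    (Ξ X : Matrix (Fin T) (Fin N) ℝ) (hX : X = F * Λᵀ + Ξ)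
    (D2 : Matrix (Fin r) (Fin r) ℝ) (hsymm : D2.IsSymm) (hinv : IsUnit D2.det)
    (heig : (1 / ((N : ℝ) * T)) • (X * Xᵀ * Fhat) = Fhat * D2)
    (H : Matrix (Fin r) (Fin r) ℝ)
    (hH : H = D2⁻¹ * ((1 / (T : ℝ)) • (Fhatᵀ * F)) * ((1 / (N : ℝ)) • (Λᵀ * Λ))) :
    ∀ t : Fin T,
      Fhat t - H.mulVec (F t) =
        D2⁻¹.mulVec ((1 / ((N : ℝ) * T)) • ∑ s : Fin T,
          ((∑ i, (∑ j, Λ i j * F t j) * Ξ s i)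
            + (∑ i, Ξ t i * (∑ j, Λ i j * F s j))
            + (∑ i, Ξ t i * Ξ s i)) • Fhat s) := by
  set c : ℝ := 1 / ((N : ℝ) * T) with hc
  have hDinv : D2⁻¹ᵀ = D2⁻¹ := by
    rw [Matrix.transpose_nonsing_inv, hsymm.eq]
  set S : Matrix (Fin T) (Fin T) ℝ := F * Λᵀ * Ξᵀ + Ξ * Λ * Fᵀ + Ξ * Ξᵀ with hS
  have h1 : Fhat = (c • (X * Xᵀ)) * Fhat * D2⁻¹ := by
    have h0 : Fhat * D2 * D2⁻¹ = Fhat := Matrix.mul_nonsing_inv_cancel_right D2 Fhat hinv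
    conv_lhs => rw [← h0, ← heig]
    simp only [Matrix.smul_mul, Matrix.mul_assoc]
  have hHT : F * Hᵀ = (c • (F * Λᵀ * Λ * Fᵀ)) * Fhat * D2⁻¹ := by
    rw [hH]
    simp only [Matrix.transpose_mul, Matrix.transpose_smul, Matrix.transpose_transpose,
      hDinv, Matrix.smul_mul, Matrix.mul_smul, smul_smul, Matrix.mul_assoc]
    congr 1
    rw [hc]; ring
  have key : Fhat - F * Hᵀ = (c • S) * Fhat * D2⁻¹ := by
    conv_lhs => rw [h1, hHT]
    rw [hX, hS]
    rw [Matrix.transpose_add, Matrix.transpose_mul, Matrix.transpose_transpose]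
    rw [Matrix.add_mul, Matrix.mul_add, Matrix.mul_add]
    simp only [Matrix.smul_mul, ← Matrix.sub_mul, ← smul_sub]
    congr 2
    simp only [Matrix.mul_assoc]
    abel
  intro t
  funext k
  have hk := congrFun (congrFun key t) k
  have hL : (Fhat t - H.mulVec (F t)) k = (Fhat - F * Hᵀ) t k := by
    simp [Matrix.sub_apply, Matrix.mul_apply, Matrix.mulVec, dotProduct,
      Matrix.transpose_apply, mul_comm]
  have hw : ∀ s : Fin T,
      ((∑ i, (∑ j, Λ i j * F t j) * Ξ s i)
        + (∑ i, Ξ t i * (∑ j, Λ i j * F s j))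
        + (∑ i, Ξ t i * Ξ s i)) = S t s := by
    intro s
    have e1 : (∑ i, (∑ j, Λ i j * F t j) * Ξ s i) = (F * Λᵀ * Ξᵀ) t s := by
      simp only [Matrix.mul_apply, Matrix.transpose_apply, Finset.sum_mul]
      exact Finset.sum_congr rfl fun i _ => Finset.sum_congr rfl fun j _ => by ring
    have e2 : (∑ i, Ξ t i * (∑ j, Λ i j * F s j)) = (Ξ * Λ * Fᵀ) t s := by
      simp only [Matrix.mul_apply, Matrix.transpose_apply, Finset.mul_sum, Finset.sum_mul]
      rw [Finset.sum_comm]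
      exact Finset.sum_congr rfl fun i _ => Finset.sum_congr rfl fun j _ => by ring
    have e3 : (∑ i, Ξ t i * Ξ s i) = (Ξ * Ξᵀ) t s := by
      simp only [Matrix.mul_apply, Matrix.transpose_apply]
    rw [e1, e2, e3, hS]
    simp only [Matrix.add_apply]
  have hR : (D2⁻¹.mulVec (c • ∑ s : Fin T,
        ((∑ i, (∑ j, Λ i j * F t j) * Ξ s i)
          + (∑ i, Ξ t i * (∑ j, Λ i j * F s j))
          + (∑ i, Ξ t i * Ξ s i)) • Fhat s)) k = ((c • S) * Fhat * D2⁻¹) t k := by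
    simp only [Matrix.mulVec, dotProduct, Pi.smul_apply, Finset.sum_apply,
      smul_eq_mul, Matrix.mul_apply, Matrix.smul_apply]
    have hsymm' : ∀ j, D2⁻¹ j k = D2⁻¹ k j := by
      intro j
      conv_lhs => rw [← hDinv, Matrix.transpose_apply]
    simp only [hw]
    simp only [hsymm', Finset.mul_sum, Finset.sum_mul]
    exact Finset.sum_congr rfl fun j _ => Finset.sum_congr rfl fun s _ => by ring
  rw [hL, hR, hk]
end
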